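/- In the grid graph G□ on ℤ×ℤ, color each vertex (x,y) with (x+5y) mod 7, each horizontal edge {(x,y),(x+1,y)} with (4+x+5y) mod 7, each vertical edge {(x,y),(x,y+1)} with (6+x+5y) mod 7, and each unit-square face with lower-left corner (x,y) with (3+x+5y) mod 7. Then: (i) for every vertex v, the color of v and the colors of its four incident edges are pairwise distinct (so the assignment is a proper total coloring); (ii) for every (x,y), the set of colors on the four corner vertices and four boundary edges of the unit square at (x,y) is exactly ZMod 7 \ {(3+x+5y) mod 7}; and (iii) any two distinct unit-square faces sharing at least one corner vertex receive distinct face colors. (This is the mod-7 strict efficient total cell coloring of the square tiling obtained from the triangular tiling by deleting the anti-diagonal edges and giving each resulting square face the color of its deleted diagonal.) -/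
import Mathlib


/-- The grid graph on ℤ × ℤ: two vertices adjacent iff their difference is ±(1,0) or ±(0,1). -/
def gridGraph : SimpleGraph (ℤ × ℤ) :=
  SimpleGraph.fromRel (fun u v => u - v = (1, 0) ∨ u - v = (0, 1))

/-- Vertex color: (x + 5y) mod 7. -/
def cV (x y : ℤ) : ZMod 7 := ((x + 5 * y : ℤ) : ZMod 7)

/-- Color of the horizontal edge {(x,y),(x+1,y)}: (4 + x + 5y) mod 7. -/
def eH (x y : ℤ) : ZMod 7 := ((4 + x + 5 * y : ℤ) : ZMod 7)

/-- Color of the vertical edge {(x,y),(x,y+1)}: (6 + x + 5y) mod 7. -/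
def eV (x y : ℤ) : ZMod 7 := ((6 + x + 5 * y : ℤ) : ZMod 7)

/-- Color of the unit-square face with lower-left corner (x,y): (3 + x + 5y) mod 7. -/
def fSq (x y : ℤ) : ZMod 7 := ((3 + x + 5 * y : ℤ) : ZMod 7)

lemma key1 : ∀ a : ZMod 7,
    ({a, a + 4, a + 3, a + 6, a + 1} : Finset (ZMod 7)).card = 5 := by decide

lemma key2 : ∀ a : ZMod 7,
    ({a, a + 1, a + 5, a + 6, a + 4, a + 2, a + 6, a} : Finset (ZMod 7)) =
      Finset.univ \ {a + 3} := by decide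

theorem stmt15 :
    -- (i) the color of each vertex and the colors of its four incident edges are
    -- pairwise distinct
    (∀ x y : ℤ,
      ({cV x y, eH x y, eH (x - 1) y, eV x y, eV x (y - 1)} : Finset (ZMod 7)).card
        = 5) ∧
    -- (ii) the boundary of each unit square carries every color except the face color
    (∀ x y : ℤ,
      ({cV x y, cV (x + 1) y, cV x (y + 1), cV (x + 1) (y + 1),
        eH x y, eH x (y + 1), eV x y, eV (x + 1) y} : Finset (ZMod 7)) =
        Finset.univ \ {fSq x y}) ∧
    -- (iii) distinct faces sharing a corner vertex get distinct face colors
    (∀ x y x' y' : ℤ, (x, y) ≠ (x', y') → |x - x'| ≤ 1 → |y - y'| ≤ 1 →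
      fSq x y ≠ fSq x' y') := by
  refine ⟨fun x y => ?_, fun x y => ?_, fun x y x' y' hne hx hy heq => ?_⟩
  · have h := key1 ((x : ZMod 7) + 5 * (y : ZMod 7))
    have e1 : cV x y = (x : ZMod 7) + 5 * (y : ZMod 7) := by simp only [cV]; push_cast; have h7 := (by decide : (7:ZMod 7) = 0); first | ring1 | first | ring1 | linear_combination h7
    have e2 : eH x y = (x : ZMod 7) + 5 * (y : ZMod 7) + 4 := by simp only [eH]; push_cast; have h7 := (by decide : (7:ZMod 7) = 0); first | ring1 | linear_combination h7
    have e3 : eH (x - 1) y = (x : ZMod 7) + 5 * (y : ZMod 7) + 3 := by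
      simp only [eH]; push_cast; have h7 := (by decide : (7:ZMod 7) = 0); first | ring1 | linear_combination h7
    have e4 : eV x y = (x : ZMod 7) + 5 * (y : ZMod 7) + 6 := by simp only [eV]; push_cast; have h7 := (by decide : (7:ZMod 7) = 0); first | ring1 | linear_combination h7
    have e5 : eV x (y - 1) = (x : ZMod 7) + 5 * (y : ZMod 7) + 1 := by
      simp only [eV]; push_cast; have h7 := (by decide : (7:ZMod 7) = 0); first | ring1 | linear_combination h7
    rw [e1, e2, e3, e4, e5]; exact h
  · have h := key2 ((x : ZMod 7) + 5 * (y : ZMod 7))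
    have e1 : cV x y = (x : ZMod 7) + 5 * (y : ZMod 7) := by simp only [cV]; push_cast; have h7 := (by decide : (7:ZMod 7) = 0); first | ring1 | first | ring1 | linear_combination h7
    have e2 : cV (x + 1) y = (x : ZMod 7) + 5 * (y : ZMod 7) + 1 := by
      simp only [cV]; push_cast; have h7 := (by decide : (7:ZMod 7) = 0); first | ring1 | first | ring1 | linear_combination h7
    have e3 : cV x (y + 1) = (x : ZMod 7) + 5 * (y : ZMod 7) + 5 := by
      simp only [cV]; push_cast; have h7 := (by decide : (7:ZMod 7) = 0); first | ring1 | first | ring1 | linear_combination h7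
    have e4 : cV (x + 1) (y + 1) = (x : ZMod 7) + 5 * (y : ZMod 7) + 6 := by
      simp only [cV]; push_cast; have h7 := (by decide : (7:ZMod 7) = 0); first | ring1 | first | ring1 | linear_combination h7
    have e5 : eH x y = (x : ZMod 7) + 5 * (y : ZMod 7) + 4 := by simp only [eH]; push_cast; have h7 := (by decide : (7:ZMod 7) = 0); first | ring1 | linear_combination h7
    have e6 : eH x (y + 1) = (x : ZMod 7) + 5 * (y : ZMod 7) + 2 := by
      simp only [eH]; push_cast; have h7 := (by decide : (7:ZMod 7) = 0); first | ring1 | linear_combination h7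
    have e7 : eV x y = (x : ZMod 7) + 5 * (y : ZMod 7) + 6 := by simp only [eV]; push_cast; have h7 := (by decide : (7:ZMod 7) = 0); first | ring1 | linear_combination h7
    have e8 : eV (x + 1) y = (x : ZMod 7) + 5 * (y : ZMod 7) := by
      simp only [eV]; push_cast; have h7 := (by decide : (7:ZMod 7) = 0); linear_combination h7
    have e9 : fSq x y = (x : ZMod 7) + 5 * (y : ZMod 7) + 3 := by
      simp [fSq]; push_cast; ring
    rw [e1, e2, e3, e4, e5, e6, e7, e8, e9]; exact h
  · have hmod : ((3 + x + 5 * y : ℤ) : ZMod 7) = ((3 + x' + 5 * y' : ℤ) : ZMod 7) := heq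
    rw [ZMod.intCast_eq_intCast_iff'] at hmod
    have hd := hmod.dvd
    have hx' := abs_le.mp hx
    have hy' := abs_le.mp hy
    have hne' : x ≠ x' ∨ y ≠ y' := by
      by_contra h
      push_neg at h
      exact hne (by rw [h.1, h.2])
    rcases hne' with h | h <;> omega
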